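/- arXiv:1610.02710 — 4 statements merged into one kernel-verified Lean document; each statement's English description precedes it below -/
import Mathlib

section
/- Disjunction Property: for all MT₀-formulas φ and ψ, if ⊨φ∨ψ then ⊨φ or ⊨ψ. -/
/-- Classical modal formulas: α ::= p | ⊥ | ¬α | α∧α | α⊗α | α→α | □α | ◇α. -/
inductive CForm : Type where
  | var : ℕ → CForm
  | bot : CForm
  | neg : CForm → CForm
  | and : CForm → CForm → CForm
  | tensor : CForm → CForm → CForm
  | impl : CForm → CForm → CForm
  | box : CForm → CForm
  | dia : CForm → CForm

/-- Formulas of full modal downward closed team logic MT₀: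
φ ::= α | =(α₁,…,αₙ,β) | φ∧φ | φ⊗φ | φ∨φ | φ→φ | □φ | ◇φ, with α,αᵢ,β classical.
Classical formulas are embedded structurally; the primitive classical negation ¬α
is represented by the constructor `cneg`. -/
inductive MTForm : Type where
  | var : ℕ → MTForm
  | bot : MTForm
  | cneg : CForm → MTForm
  | dep : List CForm → CForm → MTForm
  | and : MTForm → MTForm → MTForm
  | tensor : MTForm → MTForm → MTForm
  | or : MTForm → MTForm → MTForm
  | impl : MTForm → MTForm → MTForm
  | box : MTForm → MTForm
  | dia : MTForm → MTForm

/-- The structural embedding of classical modal formulas into MT₀ formulas. -/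
def CForm.toMT : CForm → MTForm
  | .var p => .var p
  | .bot => .bot
  | .neg α => .cneg α
  | .and α β => .and α.toMT β.toMT
  | .tensor α β => .tensor α.toMT β.toMT
  | .impl α β => .impl α.toMT β.toMT
  | .box α => .box α.toMT
  | .dia α => .dia α.toMT

/-- A (classical modal) Kripke model M = (W,R,V) with W nonempty. -/
structure KModel where
  W : Type
  ne : Nonempty W
  R : W → W → Prop
  V : ℕ → Set W

/-- R(X) = {w : ∃ v ∈ X, vRw}. -/
def KModel.img (M : KModel) (X : Set M.W) : Set M.W := {w | ∃ v ∈ X, M.R v w}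

/-- Y is a successor team of X: Y ⊆ R(X) and Y ∩ R(w) ≠ ∅ for every w ∈ X. -/
def KModel.succT (M : KModel) (X Y : Set M.W) : Prop :=
  Y ⊆ M.img X ∧ ∀ w ∈ X, ∃ u ∈ Y, M.R w u

/-- Team semantics for classical modal formulas. -/
def KModel.csat (M : KModel) : Set M.W → CForm → Prop
  | X, .var p => X ⊆ M.V p
  | X, .bot => X = ∅
  | X, .neg α => ∀ w ∈ X, ¬ M.csat {w} α
  | X, .and α β => M.csat X α ∧ M.csat X β
  | X, .tensor α β => ∃ Y Z, X = Y ∪ Z ∧ M.csat Y α ∧ M.csat Z β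
  | X, .impl α β => ∀ Y ⊆ X, M.csat Y α → M.csat Y β
  | X, .box α => M.csat (M.img X) α
  | X, .dia α => ∃ Y, M.succT X Y ∧ M.csat Y α

/-- Team semantics for MT₀ formulas. -/
def KModel.sat (M : KModel) : Set M.W → MTForm → Prop
  | X, .var p => X ⊆ M.V p
  | X, .bot => X = ∅
  | X, .cneg α => ∀ w ∈ X, ¬ M.csat {w} α
  | X, .dep αs β => ∀ w ∈ X, ∀ u ∈ X,
      (∀ α ∈ αs, (M.csat {w} α ↔ M.csat {u} α)) → (M.csat {w} β ↔ M.csat {u} β)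
  | X, .and φ ψ => M.sat X φ ∧ M.sat X ψ
  | X, .tensor φ ψ => ∃ Y Z, X = Y ∪ Z ∧ M.sat Y φ ∧ M.sat Z ψ
  | X, .or φ ψ => M.sat X φ ∨ M.sat X ψ
  | X, .impl φ ψ => ∀ Y ⊆ X, M.sat Y φ → M.sat Y ψ
  | X, .box φ => M.sat (M.img X) φ
  | X, .dia φ => ∃ Y, M.succT X Y ∧ M.sat Y φ

/-- ⊨φ : truth on every team of every Kripke model. -/
def MTValid (φ : MTForm) : Prop := ∀ (M : KModel) (X : Set M.W), M.sat X φ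

/-- φ⊨ψ : semantic entailment. -/
def MTEntails (φ ψ : MTForm) : Prop := ∀ (M : KModel) (X : Set M.W), M.sat X φ → M.sat X ψ

/-!
Validity of `φ ∨ ψ` is tested on the disjoint union of a countermodel to `φ` and a countermodel
to `ψ`, evaluated on the union of the two refuting teams. Whichever disjunct holds there also
holds on the part of the team lying in its own summand, by downward closure, and then in the
summand itself, because truth of MT₀ formulas is invariant under embeddings onto generated
submodels.
-/

open Set

lemma Function.Injective.exists_union_image_iff {α β : Type*} {f : α → β} (hf : f.Injective)
    {X : Set α} {P Q : Set β → Prop} :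
    (∃ A B, f '' X = A ∪ B ∧ P A ∧ Q B) ↔ ∃ A B, X = A ∪ B ∧ P (f '' A) ∧ Q (f '' B) := by
  constructor
  · rintro ⟨A, B, hX, hA, hB⟩
    obtain ⟨A, -, rfl⟩ := subset_image_iff.1 (hX ▸ subset_union_left : A ⊆ f '' X)
    obtain ⟨B, -, rfl⟩ := subset_image_iff.1 (hX ▸ subset_union_right : B ⊆ f '' X)
    exact ⟨A, B, (image_eq_image hf).1 (by rw [hX, image_union]), hA, hB⟩
  · rintro ⟨A, B, rfl, hA, hB⟩
    exact ⟨f '' A, f '' B, image_union f A B, hA, hB⟩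

namespace KModel

lemma img_mono (M : KModel) {X Y : Set M.W} (h : Y ⊆ X) : M.img Y ⊆ M.img X := by
  rintro w ⟨v, hv, hvw⟩
  exact ⟨v, h hv, hvw⟩

lemma succT_inter_img {M : KModel} {X Y Z : Set M.W} (hYX : Y ⊆ X) (hXZ : M.succT X Z) :
    M.succT Y (Z ∩ M.img Y) := by
  refine ⟨inter_subset_right, fun w hw => ?_⟩
  obtain ⟨u, hu, hwu⟩ := hXZ.2 w (hYX hw)
  exact ⟨u, ⟨hu, w, hw, hwu⟩, hwu⟩

theorem sat_of_subset {M : KModel} {φ : MTForm} {X Y : Set M.W} (hYX : Y ⊆ X)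
    (hX : M.sat X φ) : M.sat Y φ := by
  induction φ generalizing X Y with
  | var p => exact hYX.trans hX
  | bot => exact subset_empty_iff.mp (hX ▸ hYX)
  | cneg α => exact fun w hw => hX w (hYX hw)
  | dep αs β => exact fun w hw u hu => hX w (hYX hw) u (hYX hu)
  | and φ ψ ihφ ihψ => exact ⟨ihφ hYX hX.1, ihψ hYX hX.2⟩
  | tensor φ ψ ihφ ihψ =>
    obtain ⟨A, B, rfl, hA, hB⟩ := hX
    refine ⟨Y ∩ A, Y ∩ B, ?_, ihφ inter_subset_right hA, ihψ inter_subset_right hB⟩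
    rw [← inter_union_distrib_left, inter_eq_left.mpr hYX]
  | or φ ψ ihφ ihψ => exact hX.imp (ihφ hYX) (ihψ hYX)
  | impl φ ψ => exact fun Z hZ => hX Z (hZ.trans hYX)
  | box φ ih => exact ih (M.img_mono hYX) hX
  | dia φ ih =>
    obtain ⟨Z, hXZ, hZ⟩ := hX
    exact ⟨Z ∩ M.img Y, succT_inter_img hYX hXZ, ih inter_subset_left hZ⟩

structure IsGeneratedEmbedding (N M : KModel) (f : N.W → M.W) : Prop where
  injective : f.Injective
  rel_iff : ∀ a b, M.R (f a) (f b) ↔ N.R a b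
  mem_range_of_rel : ∀ a w, M.R (f a) w → w ∈ range f
  preimage_val : ∀ p, f ⁻¹' M.V p = N.V p

namespace IsGeneratedEmbedding

variable {N M : KModel} {f : N.W → M.W} (hf : IsGeneratedEmbedding N M f)
include hf

lemma img_image (X : Set N.W) : M.img (f '' X) = f '' N.img X := by
  ext w
  constructor
  · rintro ⟨_, ⟨a, ha, rfl⟩, haw⟩
    obtain ⟨b, rfl⟩ := hf.mem_range_of_rel a w haw
    exact ⟨b, ⟨a, ha, (hf.rel_iff a b).1 haw⟩, rfl⟩
  · rintro ⟨b, ⟨a, ha, hab⟩, rfl⟩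
    exact ⟨f a, ⟨a, ha, rfl⟩, (hf.rel_iff a b).2 hab⟩

lemma image_subset_val_iff {X : Set N.W} {p : ℕ} : f '' X ⊆ M.V p ↔ X ⊆ N.V p := by
  rw [image_subset_iff, hf.preimage_val]

lemma succT_image_image {X Y : Set N.W} : M.succT (f '' X) (f '' Y) ↔ N.succT X Y := by
  simp only [succT, hf.img_image, image_subset_image_iff hf.injective, forall_mem_image,
    exists_mem_image, hf.rel_iff]

lemma exists_succT_image_iff {X : Set N.W} {P : Set M.W → Prop} :
    (∃ Y, M.succT (f '' X) Y ∧ P Y) ↔ ∃ Y, N.succT X Y ∧ P (f '' Y) := by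
  constructor
  · rintro ⟨Y, hXY, hY⟩
    obtain ⟨Y, -, rfl⟩ := subset_image_iff.1 (hXY.1.trans (hf.img_image X).subset)
    exact ⟨Y, hf.succT_image_image.1 hXY, hY⟩
  · rintro ⟨Y, hXY, hY⟩
    exact ⟨f '' Y, hf.succT_image_image.2 hXY, hY⟩

theorem csat_image_iff (α : CForm) (X : Set N.W) : M.csat (f '' X) α ↔ N.csat X α := by
  induction α generalizing X with
  | var p => exact hf.image_subset_val_iff
  | bot => exact image_eq_empty
  | neg α ih => simp only [csat, forall_mem_image, ← image_singleton, ih]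
  | and α β ihα ihβ => simp only [csat, ihα, ihβ]
  | tensor α β ihα ihβ => simp only [csat, hf.injective.exists_union_image_iff, ihα, ihβ]
  | impl α β ihα ihβ => simp only [csat, forall_subset_image_iff, ihα, ihβ]
  | box α ih => simp only [csat, hf.img_image, ih]
  | dia α ih => simp only [csat, hf.exists_succT_image_iff, ih]

lemma csat_singleton_iff (α : CForm) (a : N.W) : M.csat {f a} α ↔ N.csat {a} α := by
  rw [← image_singleton, hf.csat_image_iff]

theorem sat_image_iff (φ : MTForm) (X : Set N.W) : M.sat (f '' X) φ ↔ N.sat X φ := by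
  induction φ generalizing X with
  | var p => exact hf.image_subset_val_iff
  | bot => exact image_eq_empty
  | cneg α => simp only [sat, forall_mem_image, hf.csat_singleton_iff]
  | dep αs β => simp only [sat, forall_mem_image, hf.csat_singleton_iff]
  | and φ ψ ihφ ihψ => simp only [sat, ihφ, ihψ]
  | tensor φ ψ ihφ ihψ => simp only [sat, hf.injective.exists_union_image_iff, ihφ, ihψ]
  | or φ ψ ihφ ihψ => simp only [sat, ihφ, ihψ]
  | impl φ ψ ihφ ihψ => simp only [sat, forall_subset_image_iff, ihφ, ihψ]
  | box φ ih => simp only [sat, hf.img_image, ih]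
  | dia φ ih => simp only [sat, hf.exists_succT_image_iff, ih]

end IsGeneratedEmbedding

def sum (M₁ M₂ : KModel) : KModel where
  W := M₁.W ⊕ M₂.W
  ne := ⟨Sum.inl M₁.ne.some⟩
  R := Sum.LiftRel M₁.R M₂.R
  V p := {w | Sum.elim (· ∈ M₁.V p) (· ∈ M₂.V p) w}

lemma isGeneratedEmbedding_inl (M₁ M₂ : KModel) :
    IsGeneratedEmbedding M₁ (M₁.sum M₂) Sum.inl where
  injective := Sum.inl_injective
  rel_iff _ _ := Sum.liftRel_inl_inl
  mem_range_of_rel _ _ := fun | .inl _ => ⟨_, rfl⟩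
  preimage_val _ := rfl

lemma isGeneratedEmbedding_inr (M₁ M₂ : KModel) :
    IsGeneratedEmbedding M₂ (M₁.sum M₂) Sum.inr where
  injective := Sum.inr_injective
  rel_iff _ _ := Sum.liftRel_inr_inr
  mem_range_of_rel _ _ := fun | .inr _ => ⟨_, rfl⟩
  preimage_val _ := rfl

end KModel

/-- Disjunction Property of MT₀. -/
theorem disjunction_property (φ ψ : MTForm) :
    MTValid (φ.or ψ) → MTValid φ ∨ MTValid ψ := by
  intro h
  by_contra! hcon
  obtain ⟨⟨M₁, X₁, h₁⟩, ⟨M₂, X₂, h₂⟩⟩ :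
      (∃ (M : KModel) (X : Set M.W), ¬ M.sat X φ) ∧ ∃ (M : KModel) (X : Set M.W), ¬ M.sat X ψ := by
    simpa only [MTValid, not_forall] using hcon
  rcases h (M₁.sum M₂) (Sum.inl '' X₁ ∪ Sum.inr '' X₂) with hφ | hψ
  · exact h₁ (((KModel.isGeneratedEmbedding_inl M₁ M₂).sat_image_iff φ X₁).1
      (KModel.sat_of_subset subset_union_left hφ))
  · exact h₂ (((KModel.isGeneratedEmbedding_inr M₁ M₂).sat_image_iff ψ X₂).1
      (KModel.sat_of_subset subset_union_right hψ))
end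

section
/- Finite Model Property: for every MT₀-formula φ, if ⊭φ (i.e., φ is not valid) then there exists a Kripke model M with finite domain and a finite team X such that M,X⊭φ. -/
/-!
Satisfaction of an MT₀-formula on a team depends only on the team up to team bisimilarity
bounded by the formula's modal depth and restricted to its variables: a bounded bisimulation
between two teams restricts to any subteam and splits along any union, which is what the
split disjunction `⊗` and the intuitionistic implication need.
Every world is bisimilar up to depth `n` to its Hintikka type of depth `n`, and the Hintikka
types of depth at most `n` over finitely many variables form a finite Kripke model. Replacing
each world of a refuting team by its type therefore gives a finite refuting team in a finite
model.
-/

namespace List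

variable {α : Type*} [SemilatticeSup α]

theorem le_foldr_sup_init (l : List α) (b : α) : b ≤ l.foldr (· ⊔ ·) b := by
  induction l with
  | nil => exact le_rfl
  | cons a l ih => exact le_sup_of_le_right ih

theorem le_foldr_sup_of_mem {l : List α} {a : α} (b : α) (ha : a ∈ l) :
    a ≤ l.foldr (· ⊔ ·) b := by
  induction l with
  | nil => exact absurd ha List.not_mem_nil
  | cons c l ih =>
    rcases List.mem_cons.mp ha with rfl | ha
    · exact le_sup_left
    · exact le_sup_of_le_right (ih ha)

end List

def CForm.mdepth : CForm → ℕ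
  | .var _ | .bot => 0
  | .neg α => α.mdepth
  | .and α β | .tensor α β | .impl α β => α.mdepth ⊔ β.mdepth
  | .box α | .dia α => α.mdepth + 1

def CForm.vars : CForm → Finset ℕ
  | .var p => {p}
  | .bot => ∅
  | .neg α | .box α | .dia α => α.vars
  | .and α β | .tensor α β | .impl α β => α.vars ⊔ β.vars

def MTForm.mdepth : MTForm → ℕ
  | .var _ | .bot => 0
  | .cneg α => α.mdepth
  | .dep αs β => (αs.map CForm.mdepth).foldr (· ⊔ ·) β.mdepth
  | .and φ ψ | .tensor φ ψ | .or φ ψ | .impl φ ψ => φ.mdepth ⊔ ψ.mdepth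
  | .box φ | .dia φ => φ.mdepth + 1

def MTForm.vars : MTForm → Finset ℕ
  | .var p => {p}
  | .bot => ∅
  | .cneg α => α.vars
  | .dep αs β => (αs.map CForm.vars).foldr (· ⊔ ·) β.vars
  | .and φ ψ | .tensor φ ψ | .or φ ψ | .impl φ ψ => φ.vars ⊔ ψ.vars
  | .box φ | .dia φ => φ.vars

def TeamRel {α β : Type*} (B : α → β → Prop) (X : Set α) (Y : Set β) : Prop :=
  (∀ a ∈ X, ∃ b ∈ Y, B a b) ∧ (∀ b ∈ Y, ∃ a ∈ X, B a b)

namespace TeamRel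

variable {α β : Type*} {B : α → β → Prop} {X : Set α} {Y : Set β}

theorem swap {C : β → α → Prop} (hBC : ∀ a b, B a b → C b a) (h : TeamRel B X Y) :
    TeamRel C Y X :=
  ⟨fun b hb => let ⟨a, ha, hab⟩ := h.2 b hb; ⟨a, ha, hBC a b hab⟩,
    fun a ha => let ⟨b, hb, hab⟩ := h.1 a ha; ⟨b, hb, hBC a b hab⟩⟩

theorem mono {C : α → β → Prop} (hBC : ∀ a b, C a b → B a b) (h : TeamRel C X Y) :
    TeamRel B X Y :=
  ⟨fun a ha => let ⟨b, hb, hab⟩ := h.1 a ha; ⟨b, hb, hBC a b hab⟩,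
    fun b hb => let ⟨a, ha, hab⟩ := h.2 b hb; ⟨a, ha, hBC a b hab⟩⟩

theorem singleton {a : α} {b : β} (hab : B a b) : TeamRel B {a} {b} :=
  ⟨fun _ ha => ⟨b, rfl, ha ▸ hab⟩, fun _ hb => ⟨a, rfl, hb ▸ hab⟩⟩

theorem image {f : α → β} (hf : ∀ a, B a (f a)) : TeamRel B X (f '' X) :=
  ⟨fun a ha => ⟨f a, Set.mem_image_of_mem f ha, hf a⟩,
    fun _ ⟨a, ha, hb⟩ => ⟨a, ha, hb ▸ hf a⟩⟩

theorem eq_empty (h : TeamRel B X Y) (hX : X = ∅) : Y = ∅ :=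
  Set.eq_empty_of_forall_notMem fun b hb =>
    let ⟨a, ha, _⟩ := h.2 b hb
    (hX ▸ ha : a ∈ (∅ : Set α))

theorem restrict (h : TeamRel B X Y) {X' : Set α} (hX' : X' ⊆ X) :
    TeamRel B X' {b ∈ Y | ∃ a ∈ X', B a b} :=
  ⟨fun a ha => let ⟨b, hb, hab⟩ := h.1 a (hX' ha); ⟨b, ⟨hb, a, ha, hab⟩, hab⟩,
    fun _ hb => hb.2⟩

theorem exists_subset_left (h : TeamRel B X Y) {Y' : Set β} (hY' : Y' ⊆ Y) :
    ∃ X' ⊆ X, TeamRel B X' Y' :=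
  ⟨{a ∈ X | ∃ b ∈ Y', B a b}, fun _ ha => ha.1, fun _ ha => ha.2,
    fun b hb => let ⟨a, ha, hab⟩ := h.2 b (hY' hb); ⟨a, ⟨ha, b, hb, hab⟩, hab⟩⟩

theorem exists_union_right {X₁ X₂ : Set α} (h : TeamRel B (X₁ ∪ X₂) Y) :
    ∃ Y₁ Y₂, Y = Y₁ ∪ Y₂ ∧ TeamRel B X₁ Y₁ ∧ TeamRel B X₂ Y₂ := by
  refine ⟨_, _, ?_, h.restrict Set.subset_union_left, h.restrict Set.subset_union_right⟩
  ext b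
  refine ⟨fun hb => ?_, by rintro (hb | hb) <;> exact hb.1⟩
  obtain ⟨a, ha | ha, hab⟩ := h.2 b hb
  exacts [Or.inl ⟨hb, a, ha, hab⟩, Or.inr ⟨hb, a, ha, hab⟩]

end TeamRel

namespace KModel

def Bisim (M N : KModel) (L : Finset ℕ) : ℕ → M.W → N.W → Prop
  | 0, w, t => ∀ p ∈ L, (w ∈ M.V p ↔ t ∈ N.V p)
  | m + 1, w, t => (∀ p ∈ L, (w ∈ M.V p ↔ t ∈ N.V p))
      ∧ (∀ u, M.R w u → ∃ t', N.R t t' ∧ Bisim M N L m u t')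
      ∧ (∀ t', N.R t t' → ∃ u, M.R w u ∧ Bisim M N L m u t')

namespace Bisim

variable {M N : KModel} {L : Finset ℕ}

theorem atoms : ∀ {m : ℕ} {w : M.W} {t : N.W}, Bisim M N L m w t →
    ∀ p ∈ L, (w ∈ M.V p ↔ t ∈ N.V p)
  | 0, _, _, h => h
  | _ + 1, _, _, h => h.1

theorem symm : ∀ {m : ℕ} {w : M.W} {t : N.W}, Bisim M N L m w t → Bisim N M L m t w
  | 0, _, _, h => fun p hp => (h p hp).symm
  | _ + 1, _, _, ⟨hV, hforth, hback⟩ =>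
    ⟨fun p hp => (hV p hp).symm,
      fun t' ht' => let ⟨u, hu, hb⟩ := hback t' ht'; ⟨u, hu, hb.symm⟩,
      fun u hu => let ⟨t', ht', hb⟩ := hforth u hu; ⟨t', ht', hb.symm⟩⟩

theorem anti {L' : Finset ℕ} (hL : L ⊆ L') :
    ∀ {m m' : ℕ} {w : M.W} {t : N.W}, m ≤ m' → Bisim M N L' m' w t → Bisim M N L m w t
  | 0, _, _, _, _, h => fun p hp => h.atoms p (hL hp)
  | _ + 1, _ + 1, _, _, hm, ⟨hV, hforth, hback⟩ =>
    ⟨fun p hp => hV p (hL hp),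
      fun u hu => let ⟨t', ht', hb⟩ := hforth u hu; ⟨t', ht', anti hL (by omega) hb⟩,
      fun t' ht' => let ⟨u, hu, hb⟩ := hback t' ht'; ⟨u, hu, anti hL (by omega) hb⟩⟩

end Bisim

section TeamBisim

variable {M N : KModel} {L : Finset ℕ} {m : ℕ} {X : Set M.W} {X' : Set N.W}

theorem _root_.TeamRel.bisim_symm (h : TeamRel (Bisim M N L m) X X') :
    TeamRel (Bisim N M L m) X' X :=
  h.swap fun _ _ => Bisim.symm

theorem _root_.TeamRel.bisim_img (h : TeamRel (Bisim M N L (m + 1)) X X') :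
    TeamRel (Bisim M N L m) (M.img X) (N.img X') := by
  constructor
  · rintro u ⟨w, hw, hwu⟩
    obtain ⟨t, ht, hb⟩ := h.1 w hw
    obtain ⟨t', htt', hb'⟩ := hb.2.1 u hwu
    exact ⟨t', ⟨t, ht, htt'⟩, hb'⟩
  · rintro t' ⟨t, ht, htt'⟩
    obtain ⟨w, hw, hb⟩ := h.2 t ht
    obtain ⟨u, hwu, hb'⟩ := hb.2.2 t' htt'
    exact ⟨u, ⟨w, hw, hwu⟩, hb'⟩

theorem _root_.TeamRel.exists_bisim_succT (h : TeamRel (Bisim M N L (m + 1)) X X') {Y : Set M.W}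
    (hY : M.succT X Y) : ∃ Y', N.succT X' Y' ∧ TeamRel (Bisim M N L m) Y Y' := by
  refine ⟨{t' ∈ N.img X' | ∃ u ∈ Y, Bisim M N L m u t'}, ⟨fun _ ht' => ht'.1, ?_⟩, ?_, ?_⟩
  · intro t ht
    obtain ⟨w, hw, hb⟩ := h.2 t ht
    obtain ⟨u, hu, hwu⟩ := hY.2 w hw
    obtain ⟨t', htt', hb'⟩ := hb.2.1 u hwu
    exact ⟨t', ⟨⟨t, ht, htt'⟩, u, hu, hb'⟩, htt'⟩
  · intro u hu
    obtain ⟨w, hw, hwu⟩ := hY.1 hu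
    obtain ⟨t, ht, hb⟩ := h.1 w hw
    obtain ⟨t', htt', hb'⟩ := hb.2.1 u hwu
    exact ⟨t', ⟨⟨t, ht, htt'⟩, u, hu, hb'⟩, hb'⟩
  · exact fun _ ht' => ht'.2

end TeamBisim

/-- One direction suffices: team bisimilarity is symmetric, see `BisimInvariant.iff`. -/
def BisimInvariant (L : Finset ℕ) (m : ℕ) (P : ∀ M : KModel, Set M.W → Prop) : Prop :=
  ∀ ⦃M N : KModel⦄ ⦃X : Set M.W⦄ ⦃X' : Set N.W⦄,
    TeamRel (Bisim M N L m) X X' → P M X → P N X'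

namespace BisimInvariant

variable {L : Finset ℕ} {m : ℕ} {P Q : ∀ M : KModel, Set M.W → Prop}

theorem iff (hP : BisimInvariant L m P) {M N : KModel} {X : Set M.W} {X' : Set N.W}
    (h : TeamRel (Bisim M N L m) X X') : P M X ↔ P N X' :=
  ⟨hP h, hP h.bisim_symm⟩

theorem iff_singleton (hP : BisimInvariant L m P) {M N : KModel} {w : M.W} {t : N.W}
    (h : Bisim M N L m w t) : P M {w} ↔ P N {t} :=
  hP.iff (TeamRel.singleton h)

theorem mono {L' : Finset ℕ} {m' : ℕ} (hP : BisimInvariant L m P) (hL : L ⊆ L') (hm : m ≤ m') :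
    BisimInvariant L' m' P :=
  fun _ _ _ _ h => hP (h.mono fun _ _ hb => hb.anti hL hm)

theorem var {p : ℕ} (hp : p ∈ L) : BisimInvariant L m fun M X => X ⊆ M.V p :=
  fun _ _ _ _ h hX t ht =>
    let ⟨_, hw, hb⟩ := h.2 t ht
    (hb.atoms p hp).mp (hX hw)

theorem bot : BisimInvariant L m fun _ X => X = ∅ :=
  fun _ _ _ _ h => h.eq_empty

theorem flatNeg (hP : BisimInvariant L m P) :
    BisimInvariant L m fun M X => ∀ w ∈ X, ¬ P M {w} :=
  fun _ _ _ _ h hX t ht =>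
    let ⟨w, hw, hb⟩ := h.2 t ht
    fun hPt => hX w hw ((hP.iff_singleton hb).mpr hPt)

theorem and (hP : BisimInvariant L m P) (hQ : BisimInvariant L m Q) :
    BisimInvariant L m fun M X => P M X ∧ Q M X :=
  fun _ _ _ _ h hX => ⟨hP h hX.1, hQ h hX.2⟩

theorem or (hP : BisimInvariant L m P) (hQ : BisimInvariant L m Q) :
    BisimInvariant L m fun M X => P M X ∨ Q M X :=
  fun _ _ _ _ h hX => hX.imp (hP h) (hQ h)

theorem tensor (hP : BisimInvariant L m P) (hQ : BisimInvariant L m Q) :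
    BisimInvariant L m fun M X => ∃ Y Z, X = Y ∪ Z ∧ P M Y ∧ Q M Z := by
  rintro _ _ _ _ h ⟨Y, Z, rfl, hY, hZ⟩
  obtain ⟨Y', Z', rfl, hYY', hZZ'⟩ := h.exists_union_right
  exact ⟨Y', Z', rfl, hP hYY' hY, hQ hZZ' hZ⟩

theorem impl (hP : BisimInvariant L m P) (hQ : BisimInvariant L m Q) :
    BisimInvariant L m fun M X => ∀ Y ⊆ X, P M Y → Q M Y := by
  intro _ _ _ _ h hX Y' hY' hPY'
  obtain ⟨Y, hY, hYY'⟩ := h.exists_subset_left hY'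
  exact hQ hYY' (hX Y hY ((hP.iff hYY').mpr hPY'))

theorem box (hP : BisimInvariant L m P) :
    BisimInvariant L (m + 1) fun M X => P M (M.img X) :=
  fun _ _ _ _ h => hP h.bisim_img

theorem dia (hP : BisimInvariant L m P) :
    BisimInvariant L (m + 1) fun M X => ∃ Y, M.succT X Y ∧ P M Y := by
  rintro _ _ _ _ h ⟨Y, hXY, hY⟩
  obtain ⟨Y', hXY', hYY'⟩ := h.exists_bisim_succT hXY
  exact ⟨Y', hXY', hP hYY' hY⟩

theorem dep {αs : List CForm} {β : CForm}
    (hαs : ∀ α ∈ αs, BisimInvariant L m fun M X => M.csat X α)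
    (hβ : BisimInvariant L m fun M X => M.csat X β) :
    BisimInvariant L m fun M X => ∀ w ∈ X, ∀ u ∈ X,
      (∀ α ∈ αs, (M.csat {w} α ↔ M.csat {u} α)) → (M.csat {w} β ↔ M.csat {u} β) := by
  intro _ _ _ _ h hX t ht t' ht' hαtt'
  obtain ⟨w, hw, hb⟩ := h.2 t ht
  obtain ⟨w', hw', hb'⟩ := h.2 t' ht'
  rw [← (hβ.iff_singleton hb), ← (hβ.iff_singleton hb')]
  refine hX w hw w' hw' fun α hα => ?_
  rw [(hαs α hα).iff_singleton hb, (hαs α hα).iff_singleton hb']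
  exact hαtt' α hα

end BisimInvariant

end KModel

open KModel

theorem CForm.bisimInvariant (α : CForm) :
    BisimInvariant α.vars α.mdepth fun M X => M.csat X α := by
  induction α with
  | var p => exact BisimInvariant.var (Finset.mem_singleton_self p)
  | bot => exact BisimInvariant.bot
  | neg α ih => exact ih.flatNeg
  | and α β ihα ihβ =>
    exact (ihα.mono le_sup_left le_sup_left).and (ihβ.mono le_sup_right le_sup_right)
  | tensor α β ihα ihβ =>
    exact (ihα.mono le_sup_left le_sup_left).tensor (ihβ.mono le_sup_right le_sup_right)
  | impl α β ihα ihβ =>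
    exact (ihα.mono le_sup_left le_sup_left).impl (ihβ.mono le_sup_right le_sup_right)
  | box α ih => exact ih.box
  | dia α ih => exact ih.dia

theorem MTForm.bisimInvariant (φ : MTForm) :
    BisimInvariant φ.vars φ.mdepth fun M X => M.sat X φ := by
  induction φ with
  | var p => exact BisimInvariant.var (Finset.mem_singleton_self p)
  | bot => exact BisimInvariant.bot
  | cneg α => exact α.bisimInvariant.flatNeg
  | dep αs β =>
    refine BisimInvariant.dep (fun α hα => α.bisimInvariant.mono ?_ ?_)
      (β.bisimInvariant.mono (List.le_foldr_sup_init _ _) (List.le_foldr_sup_init _ _))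
    exacts [List.le_foldr_sup_of_mem _ (List.mem_map_of_mem hα),
      List.le_foldr_sup_of_mem _ (List.mem_map_of_mem hα)]
  | and φ ψ ihφ ihψ =>
    exact (ihφ.mono le_sup_left le_sup_left).and (ihψ.mono le_sup_right le_sup_right)
  | tensor φ ψ ihφ ihψ =>
    exact (ihφ.mono le_sup_left le_sup_left).tensor (ihψ.mono le_sup_right le_sup_right)
  | or φ ψ ihφ ihψ =>
    exact (ihφ.mono le_sup_left le_sup_left).or (ihψ.mono le_sup_right le_sup_right)
  | impl φ ψ ihφ ihψ =>
    exact (ihφ.mono le_sup_left le_sup_left).impl (ihψ.mono le_sup_right le_sup_right)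
  | box φ ih => exact ih.box
  | dia φ ih => exact ih.dia

/-- Hintikka types of depth `k` over the variables in `L`: the variables true at a world,
and, for `k + 1`, the set of depth-`k` types of its successors. -/
def HintikkaType (L : Finset ℕ) : ℕ → Type
  | 0 => Set L
  | k + 1 => Set L × Set (HintikkaType L k)

namespace HintikkaType

variable {L : Finset ℕ}

instance finite : ∀ k, Finite (HintikkaType L k)
  | 0 => inferInstanceAs (Finite (Set L))
  | k + 1 =>
    have := finite k
    inferInstanceAs (Finite (Set L × Set (HintikkaType L k)))

def atoms : ∀ {k : ℕ}, HintikkaType L k → Set L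
  | 0, T => T
  | _ + 1, T => T.1

def Step {n : ℕ} :
    (Σ k : Fin (n + 1), HintikkaType L k) → (Σ k : Fin (n + 1), HintikkaType L k) → Prop
  | ⟨⟨0, _⟩, _⟩, _ => False
  | ⟨⟨k + 1, hk⟩, T⟩, s => ∃ S ∈ T.2, s = ⟨⟨k, by omega⟩, S⟩

end HintikkaType

def typeModel (L : Finset ℕ) (n : ℕ) : KModel where
  W := Σ k : Fin (n + 1), HintikkaType L k
  ne := ⟨⟨⟨0, n.succ_pos⟩, (∅ : Set L)⟩⟩
  R := HintikkaType.Step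
  V p := {s | ∃ hp : p ∈ L, ⟨p, hp⟩ ∈ s.2.atoms}

instance (L : Finset ℕ) (n : ℕ) : Finite (typeModel L n).W :=
  inferInstanceAs (Finite (Σ k : Fin (n + 1), HintikkaType L k))

namespace KModel

def hintikkaType (M : KModel) (L : Finset ℕ) : ∀ k, M.W → HintikkaType L k
  | 0, w => {p | w ∈ M.V p}
  | k + 1, w => ({p | w ∈ M.V p}, M.hintikkaType L k '' {u | M.R w u})

theorem atoms_hintikkaType (M : KModel) (L : Finset ℕ) :
    ∀ k (w : M.W), (M.hintikkaType L k w).atoms = {p : L | w ∈ M.V p}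
  | 0, _ | _ + 1, _ => rfl

theorem bisim_hintikkaType (M : KModel) (L : Finset ℕ) (n : ℕ) :
    ∀ k (hk : k < n + 1) (w : M.W),
      Bisim M (typeModel L n) L k w ⟨⟨k, hk⟩, M.hintikkaType L k w⟩ := by
  have hV : ∀ k (hk : k < n + 1) (w : M.W), ∀ p ∈ L, (w ∈ M.V p ↔
      (⟨⟨k, hk⟩, M.hintikkaType L k w⟩ : (typeModel L n).W) ∈ (typeModel L n).V p) := by
    intro k hk w p hp
    show _ ↔ ∃ hp : p ∈ L, (⟨p, hp⟩ : L) ∈ (M.hintikkaType L k w).atoms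
    rw [atoms_hintikkaType]
    exact ⟨fun hw => ⟨hp, hw⟩, fun ⟨_, hw⟩ => hw⟩
  intro k
  induction k with
  | zero => exact hV 0
  | succ k ih =>
    intro hk w
    refine ⟨hV _ hk w, fun u hwu => ⟨_, ⟨_, ⟨u, hwu, rfl⟩, rfl⟩, ih (by omega) u⟩, ?_⟩
    rintro _ ⟨_, ⟨u, hwu, rfl⟩, rfl⟩
    exact ⟨u, hwu, ih _ u⟩

def toTypeModel (M : KModel) (L : Finset ℕ) (n : ℕ) (w : M.W) : (typeModel L n).W :=
  ⟨Fin.last n, M.hintikkaType L n w⟩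

theorem teamRel_bisim_toTypeModel (M : KModel) (L : Finset ℕ) (n : ℕ) (X : Set M.W) :
    TeamRel (Bisim M (typeModel L n) L n) X (M.toTypeModel L n '' X) :=
  TeamRel.image fun w => M.bisim_hintikkaType L n n n.lt_succ_self w

end KModel

/-- STATEMENT 15: Finite Model Property of MT₀: every non-valid formula is refuted
in a Kripke model with finite domain on a finite team. -/
theorem finite_model_property (φ : MTForm) (h : ¬ MTValid φ) :
    ∃ (M : KModel) (X : Set M.W), Finite M.W ∧ X.Finite ∧ ¬ M.sat X φ := by
  obtain ⟨M, X, hX⟩ : ∃ (M : KModel) (X : Set M.W), ¬ M.sat X φ := by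
    simpa [MTValid] using h
  refine ⟨typeModel φ.vars φ.mdepth, M.toTypeModel φ.vars φ.mdepth '' X, inferInstance,
    Set.toFinite _, fun hsat => hX ?_⟩
  exact (φ.bisimInvariant.iff (M.teamRel_bisim_toTypeModel _ _ X)).mpr hsat
end

section
/- Frame correspondence for the box-distribution axiom: a bi-relation intuitionistic Kripke frame F=(W,≥,R) validates □(p∨q)→(□p∨□q) if and only if F satisfies condition (G1'): for all w,u,v∈W, if u,v∈(≥∘R)(w) then there exists t∈(≥∘R)(w) such that t≥u and t≥v. -/
/-- Modal formulas: φ ::= p | ⊥ | φ∧φ | φ∨φ | φ→φ | □φ | ◇φ. -/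
inductive MForm : Type where
  | var : ℕ → MForm
  | bot : MForm
  | and : MForm → MForm → MForm
  | or : MForm → MForm → MForm
  | impl : MForm → MForm → MForm
  | box : MForm → MForm
  | dia : MForm → MForm

/-- A bi-relation intuitionistic Kripke frame F = (W,≥,R): W nonempty, ≥ a
partial order (here `ge w v` reads "w ≥ v", i.e. v is accessible from w along the
intuitionistic order), R a binary relation, satisfying conditions (F1) and (F2). -/
structure BiFrame where
  W : Type
  ne : Nonempty W
  ge : W → W → Prop
  R : W → W → Prop
  ge_refl : ∀ w, ge w w
  ge_trans : ∀ {w v u}, ge w v → ge v u → ge w u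
  ge_antisymm : ∀ {w v}, ge w v → ge v w → w = v
  F1 : ∀ {w w' v}, ge w w' → R w v → ∃ v', ge v v' ∧ R w' v'
  F2 : ∀ {w v v'}, R w v → ge v v' → ∃ w', ge w w' ∧ R w' v'

/-- A valuation on a bi-relation frame is monotone if w∈V(p) and w≥v imply v∈V(p). -/
def MonotoneVal (F : BiFrame) (V : ℕ → Set F.W) : Prop :=
  ∀ p w v, w ∈ V p → F.ge w v → v ∈ V p

/-- Single-world satisfaction ⊩ in the model (F,V). -/
def fsat (F : BiFrame) (V : ℕ → Set F.W) : F.W → MForm → Prop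
  | w, .var p => w ∈ V p
  | _, .bot => False
  | w, .and φ ψ => fsat F V w φ ∧ fsat F V w ψ
  | w, .or φ ψ => fsat F V w φ ∨ fsat F V w ψ
  | w, .impl φ ψ => ∀ v, F.ge w v → fsat F V v φ → fsat F V v ψ
  | w, .box φ => ∀ u v, F.ge w u → F.R u v → fsat F V v φ
  | w, .dia φ => ∃ v, F.R w v ∧ fsat F V v φ

/-- F validates φ: φ is satisfied at every world under every monotone valuation. -/
def FrameValid (F : BiFrame) (φ : MForm) : Prop :=
  ∀ V, MonotoneVal F V → ∀ w, fsat F V w φ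

/-- Condition (G1'): for all w,u,v, if u,v ∈ (≥∘R)(w) then there exists
t ∈ (≥∘R)(w) with t≥u and t≥v. -/
def G1' (F : BiFrame) : Prop :=
  ∀ w u v : F.W, (∃ z, F.ge w z ∧ F.R z u) → (∃ z, F.ge w z ∧ F.R z v) →
    ∃ t, (∃ z, F.ge w z ∧ F.R z t) ∧ F.ge t u ∧ F.ge t v

/-!
Sound direction: if `v ⊮ □p` and `v ⊮ □q` are witnessed by `u₁, u₂ ∈ (≥∘R)(v)`, then (G1') gives
a common upper bound `t ∈ (≥∘R)(v)` of `u₁, u₂`; as `v ⊩ □(p ∨ q)`, `t` forces `p` or `q`, and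
persistence pushes this down to `u₁` or `u₂`.

Converse: if (G1') fails for `u, v ∈ (≥∘R)(w)`, let `p` hold exactly at the worlds not above `u`
and `q` exactly at those not above `v`. Every world of `(≥∘R)(w)` misses `u` or `v`, so
`w ⊩ □(p ∨ q)`, while `u` refutes `□p` and `v` refutes `□q`.
-/

def MForm.boxOr (p q : ℕ) : MForm :=
  (MForm.box ((MForm.var p).or (MForm.var q))).impl
    ((MForm.box (MForm.var p)).or (MForm.box (MForm.var q)))

namespace BiFrame

variable (F : BiFrame)

def GeR (w v : F.W) : Prop := ∃ z, F.ge w z ∧ F.R z v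

theorem fsat_box_iff {V : ℕ → Set F.W} {w : F.W} {φ : MForm} :
    fsat F V w (.box φ) ↔ ∀ v, F.GeR w v → fsat F V v φ :=
  ⟨fun h v ⟨z, hwz, hzv⟩ => h z v hwz hzv, fun h z v hwz hzv => h v ⟨z, hwz, hzv⟩⟩

theorem not_ge_of_ge_of_not_ge {x y u : F.W} (hxu : ¬ F.ge x u) (hxy : F.ge x y) :
    ¬ F.ge y u :=
  fun hyu => hxu (F.ge_trans hxy hyu)

def separatingVal (p q : ℕ) (u v : F.W) : ℕ → Set F.W := fun r =>
  if r = p then {x | ¬ F.ge x u} else if r = q then {x | ¬ F.ge x v} else ∅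

theorem mem_separatingVal_left {p q : ℕ} {u v x : F.W} :
    x ∈ F.separatingVal p q u v p ↔ ¬ F.ge x u := by
  simp only [separatingVal, if_true, Set.mem_ofPred_eq]

theorem mem_separatingVal_right {p q : ℕ} (hpq : p ≠ q) {u v x : F.W} :
    x ∈ F.separatingVal p q u v q ↔ ¬ F.ge x v := by
  simp only [separatingVal, if_neg hpq.symm, if_true, Set.mem_ofPred_eq]

theorem monotoneVal_separatingVal (p q : ℕ) (u v : F.W) :
    MonotoneVal F (F.separatingVal p q u v) := by
  intro r x y hx hxy
  unfold separatingVal at hx ⊢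
  split_ifs at hx ⊢
  exacts [F.not_ge_of_ge_of_not_ge hx hxy, F.not_ge_of_ge_of_not_ge hx hxy, hx]

end BiFrame

open BiFrame

theorem frameValid_boxOr_of_G1' {F : BiFrame} (hF : G1' F) (p q : ℕ) :
    FrameValid F (MForm.boxOr p q) := by
  intro V hV w v _ hbox
  rw [fsat_box_iff] at hbox
  by_contra hcon
  rw [fsat, fsat_box_iff, fsat_box_iff, not_or] at hcon
  push Not at hcon
  obtain ⟨⟨u₁, hu₁, hpu₁⟩, ⟨u₂, hu₂, hqu₂⟩⟩ := hcon
  obtain ⟨t, ht, htu₁, htu₂⟩ := hF v u₁ u₂ hu₁ hu₂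
  rcases hbox t ht with hpt | hqt
  exacts [hpu₁ (hV p t u₁ hpt htu₁), hqu₂ (hV q t u₂ hqt htu₂)]

theorem G1'_of_frameValid_boxOr {F : BiFrame} {p q : ℕ} (hpq : p ≠ q)
    (hF : FrameValid F (MForm.boxOr p q)) : G1' F := by
  intro w u v hu hv
  by_contra hjoin
  set V := F.separatingVal p q u v
  have hbox : fsat F V w (.box ((MForm.var p).or (MForm.var q))) := by
    refine F.fsat_box_iff.mpr fun t ht => ?_
    by_cases htu : F.ge t u
    · exact .inr <| (F.mem_separatingVal_right hpq).mpr fun htv => hjoin ⟨t, ht, htu, htv⟩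
    · exact .inl <| F.mem_separatingVal_left.mpr htu
  rcases hF V (F.monotoneVal_separatingVal p q u v) w w (F.ge_refl w) hbox with hp | hq
  · exact F.mem_separatingVal_left.mp (F.fsat_box_iff.mp hp u hu) (F.ge_refl u)
  · exact (F.mem_separatingVal_right hpq).mp (F.fsat_box_iff.mp hq v hv) (F.ge_refl v)

/-- a bi-relation intuitionistic Kripke frame validates
□(p∨q)→(□p∨□q) (for distinct variables p,q) iff it satisfies (G1'). -/
theorem boxOr_frame_correspondence (F : BiFrame) (p q : ℕ) (hpq : p ≠ q) :
    FrameValid F ((MForm.box ((MForm.var p).or (MForm.var q))).impl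
      ((MForm.box (MForm.var p)).or (MForm.box (MForm.var q)))) ↔ G1' F :=
  ⟨G1'_of_frameValid_boxOr hpq, fun hF => frameValid_boxOr_of_G1' hF p q⟩
end

section
/- Frame correspondence for ¬□¬p→◇¬¬p: a ≥-saturated bi-relation intuitionistic Kripke frame F=(W,≥,R) validates ¬□¬p→◇¬¬p if and only if F satisfies condition (G2): for every w∈W and every set E of ≥-endpoints with E⊆R(E_w) and E∩R(v)≠∅ for every v∈E_w, there exists t∈W such that wRt and E_t⊆E. -/
/-- w is an ≥-endpoint. -/
def IsEnd (F : BiFrame) (w : F.W) : Prop := ∀ v, F.ge w v → v = w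

/-- E_w : the set of all ≥-endpoints seen from w. -/
def Ends (F : BiFrame) (w : F.W) : Set F.W := {v | F.ge w v ∧ IsEnd F v}

/-- R(E) = {u : ∃ v ∈ E, vRu}. -/
def Rimg (F : BiFrame) (E : Set F.W) : Set F.W := {u | ∃ v ∈ E, F.R v u}

/-- F is ≥-saturated: every E_w is nonempty, and every nonempty subset of E_w is
of the form E_v for some v with w≥v. -/
def Saturated (F : BiFrame) : Prop :=
  ∀ w, (Ends F w).Nonempty ∧
    ∀ E ⊆ Ends F w, E.Nonempty → ∃ v, F.ge w v ∧ Ends F v = E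

/-- Condition (G2): for every w and every set E of ≥-endpoints with E ⊆ R(E_w)
and E ∩ R(v) ≠ ∅ for every v ∈ E_w, there is t with wRt and E_t ⊆ E. -/
def G2 (F : BiFrame) : Prop :=
  ∀ (w : F.W) (E : Set F.W), (∀ e ∈ E, IsEnd F e) → E ⊆ Rimg F (Ends F w) →
    (∀ v ∈ Ends F w, ∃ u ∈ E, F.R v u) →
    ∃ t, F.R w t ∧ Ends F t ⊆ E

/-!
When every world sees an endpoint and the valuation is monotone, both sides of the formula
are decided on endpoints: `¬¬p` holds at `w` iff `p` holds on `E_w`, and `¬□¬p` holds at `w`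
iff every `u ∈ E_w` has an `R`-successor endpoint satisfying `p` (by (F2), if `u R b` and
`b ≥ e`, then `u R e` itself, since `u` refines only to itself). Validity therefore says: if
a monotone valuation lets every `u ∈ E_w` see a `p`-endpoint, some `t` with `w R t` has
`E_t ⊆ V(p)`. The valuation `V(p) = E` turns this into (G2); conversely (G2), applied to the
`p`-endpoints in `R(E_w)`, produces such a `t`.
-/

section

variable {F : BiFrame} {V : ℕ → Set F.W}

theorem Ends.subset_of_ge {w v : F.W} (h : F.ge w v) : Ends F v ⊆ Ends F w :=
  fun _ he => ⟨F.ge_trans h he.1, he.2⟩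

theorem MonotoneVal.const_of_isEnd {E : Set F.W} (hE : ∀ e ∈ E, IsEnd F e) :
    MonotoneVal F fun _ => E := by
  intro _ x v hx hxv
  rwa [hE x hx v hxv]

theorem frameValid_impl_iff {φ ψ : MForm} :
    FrameValid F (φ.impl ψ) ↔ ∀ V, MonotoneVal F V → ∀ w, fsat F V w φ → fsat F V w ψ :=
  ⟨fun h V hV w => h V hV w w (F.ge_refl w),
    fun h V hV _ v _ => h V hV v⟩

theorem fsat_neg_neg_var_iff (hends : ∀ w, (Ends F w).Nonempty) {p : ℕ} {w : F.W} :
    fsat F V w (((MForm.var p).impl .bot).impl .bot) ↔ Ends F w ⊆ V p := by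
  constructor
  · intro h e he
    by_contra hep
    refine h e he.1 fun x hex hx => hep ?_
    rwa [he.2 x hex] at hx
  · intro h v hwv hneg
    obtain ⟨e, he⟩ := hends v
    exact hneg e he.1 (h (Ends.subset_of_ge hwv he))

theorem fsat_box_neg_var_iff_of_isEnd (hends : ∀ w, (Ends F w).Nonempty)
    (hV : MonotoneVal F V) {p : ℕ} {u : F.W} (hu : IsEnd F u) :
    fsat F V u ((MForm.var p).impl .bot).box ↔ ∀ e, IsEnd F e → F.R u e → e ∉ V p := by
  constructor
  · exact fun h e _ hue hep => h u e (F.ge_refl u) hue e (F.ge_refl e) hep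
  · intro h a b hua hab c hbc hcp
    obtain ⟨e, hce, he⟩ := hends c
    obtain ⟨u', huu', hu'e⟩ := F.F2 hab (F.ge_trans hbc hce)
    rw [hu a hua] at huu'
    rw [hu u' huu'] at hu'e
    exact h e he hu'e (hV p c e hcp hce)

theorem fsat_neg_box_neg_var_iff (hends : ∀ w, (Ends F w).Nonempty) (hV : MonotoneVal F V)
    {p : ℕ} {w : F.W} :
    fsat F V w (((MForm.var p).impl .bot).box.impl .bot) ↔
      ∀ u ∈ Ends F w, ∃ e, IsEnd F e ∧ F.R u e ∧ e ∈ V p := by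
  constructor
  · intro h u hu
    by_contra! hno
    exact h u hu.1 ((fsat_box_neg_var_iff_of_isEnd hends hV hu.2).2 hno)
  · intro h v hwv hbox
    obtain ⟨u, hu⟩ := hends v
    obtain ⟨e, he, hue, hep⟩ := h u (Ends.subset_of_ge hwv hu)
    have hubox : fsat F V u ((MForm.var p).impl .bot).box :=
      fun a b hua hab => hbox a b (F.ge_trans hu.1 hua) hab
    exact (fsat_box_neg_var_iff_of_isEnd hends hV hu.2).1 hubox e he hue hep

theorem g2_iff_forall_monotoneVal (p : ℕ) :
    G2 F ↔ ∀ V, MonotoneVal F V → ∀ w,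
      (∀ u ∈ Ends F w, ∃ e, IsEnd F e ∧ F.R u e ∧ e ∈ V p) → ∃ t, F.R w t ∧ Ends F t ⊆ V p := by
  constructor
  · intro hG2 V _ w h
    let E : Set F.W := {e | IsEnd F e ∧ e ∈ Rimg F (Ends F w) ∧ e ∈ V p}
    have hmeet : ∀ u ∈ Ends F w, ∃ e ∈ E, F.R u e := by
      intro u hu
      obtain ⟨e, he, hue, hep⟩ := h u hu
      exact ⟨e, ⟨he, ⟨u, hu, hue⟩, hep⟩, hue⟩
    obtain ⟨t, hwt, htE⟩ := hG2 w E (fun _ he => he.1) (fun _ he => he.2.1) hmeet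
    exact ⟨t, hwt, fun e he => (htE he).2.2⟩
  · intro h w E hE _ hmeet
    refine h (fun _ => E) (MonotoneVal.const_of_isEnd hE) w fun u hu => ?_
    obtain ⟨e, heE, hue⟩ := hmeet u hu
    exact ⟨e, hE e heE, hue, heE⟩

end

/-- STATEMENT 19: a ≥-saturated bi-relation intuitionistic Kripke frame validates
¬□¬p→◇¬¬p (where ¬χ abbreviates χ→⊥) iff it satisfies (G2). -/
theorem negBoxNeg_frame_correspondence (F : BiFrame) (p : ℕ) (hsat : Saturated F) :
    FrameValid F
      ((((MForm.var p).impl .bot).box.impl .bot).impl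
        (MForm.dia (((MForm.var p).impl .bot).impl .bot))) ↔ G2 F := by
  have hends : ∀ w, (Ends F w).Nonempty := fun w => (hsat w).1
  rw [frameValid_impl_iff, g2_iff_forall_monotoneVal p]
  refine forall₂_congr fun V hV => forall_congr' fun w => ?_
  rw [fsat_neg_box_neg_var_iff hends hV]
  exact imp_congr_right fun _ =>
    exists_congr fun _ => and_congr_right fun _ => fsat_neg_neg_var_iff hends
end
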